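/- For any natural number ν ≥ 5 and any natural number K with 2 ≤ K ≤ √ν, one has (2Φ(-√(ν/K)))^K < 2Φ(-√ν), where Φ is the standard normal CDF. -/

import Mathlib

/-!
The bound rests on the Mills-ratio estimates for the Gaussian tail
`G(x) = ∫_{-∞}^{-x} e^{-s²/2} ds`, namely `x / (1 + x²) · e^{-x²/2} ≤ G(x) ≤ e^{-x²/2} / x`, both
obtained by comparing the integrand with an explicit derivative. With `a = √(ν/K)`, the upper bound
gives `2Φ(-a) ≤ c · e^{-a²/2}` where `c² = 2K/(πν) ≤ 2/(π√ν) < 1`, so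
`(2Φ(-a))^K ≤ c² e^{-ν/2} ≤ 2/(π√ν) · e^{-ν/2}`. The lower bound at `√ν` beats this as soon as
`(1 + ν)√(2π) < πν`, which holds for `ν ≥ 4`.
-/

open Real MeasureTheory

noncomputable def stdNormalCDF (t : ℝ) : ℝ :=
  ∫ s in Set.Iic t, Real.exp (-s ^ 2 / 2) / Real.sqrt (2 * Real.pi)

open Set Filter Topology

lemma integrable_exp_neg_sq_div_two : Integrable (fun s : ℝ => exp (-s ^ 2 / 2)) := by
  simpa [neg_div, div_eq_inv_mul] using integrable_exp_neg_mul_sq (by norm_num : (0 : ℝ) < 1 / 2)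

lemma integrable_mul_exp_neg_sq_div_two : Integrable (fun s : ℝ => s * exp (-s ^ 2 / 2)) := by
  simpa [neg_div, div_eq_inv_mul] using
    integrable_mul_exp_neg_mul_sq (by norm_num : (0 : ℝ) < 1 / 2)

lemma hasDerivAt_exp_neg_sq_div_two (s : ℝ) :
    HasDerivAt (fun t : ℝ => exp (-t ^ 2 / 2)) (-s * exp (-s ^ 2 / 2)) s := by
  have h : HasDerivAt (fun t : ℝ => -t ^ 2 / 2) (-s) s :=
    (((hasDerivAt_pow 2 s).neg).div_const 2).congr_deriv (by norm_num; ring)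
  exact h.exp.congr_deriv (mul_comm _ _)

lemma tendsto_exp_neg_sq_div_two_atBot : Tendsto (fun s : ℝ => exp (-s ^ 2 / 2)) atBot (𝓝 0) := by
  have hsq : Tendsto (fun s : ℝ => s ^ 2) atBot atTop := by
    simpa [Function.comp_def] using
      (tendsto_pow_atTop (α := ℝ) two_ne_zero).comp tendsto_neg_atBot_atTop
  have h : Tendsto (fun s : ℝ => -s ^ 2 / 2) atBot atBot :=
    (tendsto_neg_atTop_atBot.comp hsq).atBot_div_const two_pos
  exact tendsto_exp_atBot.comp h

lemma integral_Iic_neg_mul_exp_neg_sq_div_two (c : ℝ) :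
    ∫ s in Iic c, -s * exp (-s ^ 2 / 2) = exp (-c ^ 2 / 2) := by
  have hint : IntegrableOn (fun s : ℝ => -s * exp (-s ^ 2 / 2)) (Iic c) := by
    simpa [neg_mul] using integrable_mul_exp_neg_sq_div_two.neg.integrableOn
  simpa using integral_Iic_of_hasDerivAt_of_tendsto'
    (fun s _ => hasDerivAt_exp_neg_sq_div_two s) hint tendsto_exp_neg_sq_div_two_atBot

lemma integral_Iic_neg_exp_neg_sq_div_two_le {x : ℝ} (hx : 0 < x) :
    ∫ s in Iic (-x), exp (-s ^ 2 / 2) ≤ exp (-x ^ 2 / 2) / x := by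
  have hint : Integrable (fun s : ℝ => x⁻¹ * (-s * exp (-s ^ 2 / 2))) := by
    simpa [neg_mul] using (integrable_mul_exp_neg_sq_div_two.neg.const_mul x⁻¹)
  calc ∫ s in Iic (-x), exp (-s ^ 2 / 2)
      ≤ ∫ s in Iic (-x), x⁻¹ * (-s * exp (-s ^ 2 / 2)) := by
        refine setIntegral_mono_on integrable_exp_neg_sq_div_two.integrableOn hint.integrableOn
          measurableSet_Iic fun s (hs : s ≤ -x) => ?_
        have h1 : 1 ≤ x⁻¹ * -s := by rw [inv_mul_eq_div, le_div_iff₀ hx]; linarith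
        nlinarith [exp_pos (-s ^ 2 / 2)]
    _ = exp (-x ^ 2 / 2) / x := by
        rw [integral_const_mul, integral_Iic_neg_mul_exp_neg_sq_div_two, neg_sq, inv_mul_eq_div]

lemma hasDerivAt_mul_exp_neg_sq_div_two_div (s : ℝ) :
    HasDerivAt (fun t : ℝ => t * exp (-t ^ 2 / 2) / (1 + t ^ 2))
      (exp (-s ^ 2 / 2) * (2 / (1 + s ^ 2) ^ 2 - 1)) s := by
  have hnum := (hasDerivAt_id s).mul (hasDerivAt_exp_neg_sq_div_two s)
  have hden := (hasDerivAt_pow 2 s).const_add 1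
  refine (hnum.div hden (by positivity)).congr_deriv ?_
  simp only [id, Pi.mul_apply]
  field_simp
  ring

lemma integrable_exp_neg_sq_div_two_mul :
    Integrable (fun s : ℝ => exp (-s ^ 2 / 2) * (2 / (1 + s ^ 2) ^ 2 - 1)) := by
  refine integrable_exp_neg_sq_div_two.mono' (by fun_prop) (Eventually.of_forall fun s => ?_)
  have h2 : 2 / (1 + s ^ 2) ^ 2 ≤ 2 :=
    div_le_self zero_le_two (one_le_pow₀ (by nlinarith [sq_nonneg s]))
  have h0 : 0 ≤ 2 / (1 + s ^ 2) ^ 2 := by positivity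
  rw [norm_mul, Real.norm_of_nonneg (exp_pos _).le]
  exact mul_le_of_le_one_right (exp_pos _).le (abs_le.2 ⟨by linarith, by linarith⟩)

lemma tendsto_mul_exp_neg_sq_div_two_div_atBot :
    Tendsto (fun s : ℝ => s * exp (-s ^ 2 / 2) / (1 + s ^ 2)) atBot (𝓝 0) := by
  refine squeeze_zero_norm (fun s => ?_) tendsto_exp_neg_sq_div_two_atBot
  have hs : |s| ≤ 1 + s ^ 2 := by nlinarith [abs_nonneg s, sq_abs s, sq_nonneg (|s| - 1)]
  rw [norm_div, norm_mul, Real.norm_of_nonneg (exp_pos _).le,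
    Real.norm_of_nonneg (by positivity : (0 : ℝ) ≤ 1 + s ^ 2), Real.norm_eq_abs,
    div_le_iff₀ (by positivity), mul_comm]
  exact mul_le_mul_of_nonneg_left hs (exp_pos _).le

/-- The integrand dominates `-(d/ds) (s e^{-s²/2} / (1 + s²)) = e^{-s²/2} (1 - 2/(1+s²)²)`. -/
lemma mul_exp_neg_sq_div_two_div_le_integral_Iic (x : ℝ) :
    x * exp (-x ^ 2 / 2) / (1 + x ^ 2) ≤ ∫ s in Iic (-x), exp (-s ^ 2 / 2) := by
  have hftc := integral_Iic_of_hasDerivAt_of_tendsto' (a := -x)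
    (fun s _ => hasDerivAt_mul_exp_neg_sq_div_two_div s)
    integrable_exp_neg_sq_div_two_mul.integrableOn tendsto_mul_exp_neg_sq_div_two_div_atBot
  calc x * exp (-x ^ 2 / 2) / (1 + x ^ 2)
      = ∫ s in Iic (-x), -(exp (-s ^ 2 / 2) * (2 / (1 + s ^ 2) ^ 2 - 1)) := by
        rw [integral_neg, hftc, neg_sq]
        ring
    _ ≤ ∫ s in Iic (-x), exp (-s ^ 2 / 2) := by
        refine setIntegral_mono_on integrable_exp_neg_sq_div_two_mul.neg.integrableOn
          integrable_exp_neg_sq_div_two.integrableOn measurableSet_Iic fun s _ => ?_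
        have h0 : 0 < 2 / (1 + s ^ 2) ^ 2 := by positivity
        nlinarith [exp_pos (-s ^ 2 / 2)]

lemma stdNormalCDF_eq_integral_div (t : ℝ) :
    stdNormalCDF t = (∫ s in Iic t, exp (-s ^ 2 / 2)) / √(2 * π) :=
  integral_div _ _

lemma stdNormalCDF_nonneg (t : ℝ) : 0 ≤ stdNormalCDF t :=
  integral_nonneg fun _ => by positivity

lemma stdNormalCDF_neg_le {x : ℝ} (hx : 0 < x) :
    stdNormalCDF (-x) ≤ exp (-x ^ 2 / 2) / (x * √(2 * π)) := by
  rw [stdNormalCDF_eq_integral_div, ← div_div]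
  gcongr
  exact integral_Iic_neg_exp_neg_sq_div_two_le hx

lemma le_stdNormalCDF_neg (x : ℝ) :
    x * exp (-x ^ 2 / 2) / ((1 + x ^ 2) * √(2 * π)) ≤ stdNormalCDF (-x) := by
  rw [stdNormalCDF_eq_integral_div, ← div_div]
  gcongr
  exact mul_exp_neg_sq_div_two_div_le_integral_Iic x

lemma one_add_mul_sqrt_two_pi_lt_pi_mul {x : ℝ} (hx : 4 ≤ x) : (1 + x) * √(2 * π) < π * x := by
  have hsqrt : √(2 * π) < 2.507 := by
    rw [sqrt_lt' (by norm_num)]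
    linarith [pi_lt_d4]
  nlinarith [pi_gt_d2, sqrt_nonneg (2 * π)]

lemma two_mul_stdNormalCDF_neg_pow_le {x : ℝ} {n : ℕ} (hx : 0 < x) (hx_sq : 2 / π ≤ x ^ 2)
    (hn : 2 ≤ n) : (2 * stdNormalCDF (-x)) ^ n ≤ 2 / (π * x ^ 2) * exp (-n * x ^ 2 / 2) := by
  set c := 2 / (x * √(2 * π))
  have hc_sq : c ^ 2 = 2 / (π * x ^ 2) := by
    rw [div_pow, mul_pow, sq_sqrt (by positivity : (0 : ℝ) ≤ 2 * π)]
    field_simp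
  have hc_le_one : c ≤ 1 := by
    refine (pow_le_one_iff_of_nonneg (by positivity) two_ne_zero).1 ?_
    rw [hc_sq, div_le_one (by positivity)]
    rwa [div_le_iff₀' pi_pos] at hx_sq
  calc (2 * stdNormalCDF (-x)) ^ n
      ≤ (c * exp (-x ^ 2 / 2)) ^ n := by
        refine pow_le_pow_left₀ (mul_nonneg zero_le_two (stdNormalCDF_nonneg _)) ?_ n
        calc 2 * stdNormalCDF (-x) ≤ 2 * (exp (-x ^ 2 / 2) / (x * √(2 * π))) := by
              gcongr; exact stdNormalCDF_neg_le hx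
          _ = c * exp (-x ^ 2 / 2) := by ring
    _ = c ^ n * exp (-n * x ^ 2 / 2) := by
        rw [mul_pow, ← exp_nat_mul]
        ring_nf
    _ ≤ c ^ 2 * exp (-n * x ^ 2 / 2) :=
        mul_le_mul_of_nonneg_right (pow_le_pow_of_le_one (by positivity) hc_le_one hn)
          (exp_pos _).le
    _ = 2 / (π * x ^ 2) * exp (-n * x ^ 2 / 2) := by rw [hc_sq]

lemma two_div_pi_mul_exp_lt_two_mul_stdNormalCDF_neg {x : ℝ} (hx : 2 ≤ x) :
    2 / (π * x) * exp (-x ^ 2 / 2) < 2 * stdNormalCDF (-x) := by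
  have hx0 : 0 < x := by linarith
  have key := one_add_mul_sqrt_two_pi_lt_pi_mul (x := x ^ 2) (by nlinarith)
  calc 2 / (π * x) * exp (-x ^ 2 / 2)
      < 2 * (x * exp (-x ^ 2 / 2) / ((1 + x ^ 2) * √(2 * π))) := by
        rw [mul_div_assoc', div_mul_eq_mul_div, div_lt_div_iff₀ (by positivity) (by positivity)]
        nlinarith [mul_pos (mul_pos (exp_pos (-x ^ 2 / 2)) hx0) hx0]
    _ ≤ 2 * stdNormalCDF (-x) := by gcongr; exact le_stdNormalCDF_neg x

theorem batch_tail_lt_single_tail (ν K : ℕ) (hν : 5 ≤ ν) (hK2 : 2 ≤ K)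
    (hKν : (K : ℝ) ≤ Real.sqrt ν) :
    (2 * stdNormalCDF (-Real.sqrt ((ν : ℝ) / (K : ℝ)))) ^ K <
      2 * stdNormalCDF (-Real.sqrt (ν : ℝ)) := by
  have hK : (0 : ℝ) < K := by positivity
  set a := √((ν : ℝ) / K)
  set b := √(ν : ℝ)
  have hb_sq : b ^ 2 = ν := sq_sqrt (Nat.cast_nonneg ν)
  have ha_sq : a ^ 2 = ν / K := sq_sqrt (by positivity)
  have hb : 2 ≤ b := by
    have : (5 : ℝ) ≤ ν := by exact_mod_cast hν
    nlinarith [sqrt_nonneg (ν : ℝ)]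
  have hb_le_a_sq : b ≤ a ^ 2 := by
    rw [ha_sq, le_div_iff₀ hK, ← hb_sq, sq]
    exact mul_le_mul_of_nonneg_left hKν (by positivity)
  have hK_mul_a_sq : K * a ^ 2 = b ^ 2 := by rw [ha_sq, hb_sq]; field_simp
  calc (2 * stdNormalCDF (-a)) ^ K
      ≤ 2 / (π * a ^ 2) * exp (-K * a ^ 2 / 2) := by
        refine two_mul_stdNormalCDF_neg_pow_le (sqrt_pos.2 (by positivity)) ?_ hK2
        linarith [div_le_one_of_le₀ (by linarith [pi_gt_three] : 2 ≤ π) pi_pos.le]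
    _ ≤ 2 / (π * b) * exp (-b ^ 2 / 2) := by
        rw [neg_mul, hK_mul_a_sq]
        gcongr
    _ < 2 * stdNormalCDF (-b) := two_div_pi_mul_exp_lt_two_mul_stdNormalCDF_neg hb
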